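/- arXiv:1708.07372 — 4 statements merged into one kernel-verified Lean document; each statement's English description precedes it below -/
import Mathlib

section
/- Let C be a d-clutter on a finite vertex set V with C not complete. Let Δ = ⟨C⟩ and Γ = ⟨C^∨⟩, and let v ∈ V be a shedding vertex of Γ. Set D = Facets(link_Δ(v)), a (d−1)-dimensional uniform clutter on V \ {v}. Then ⟨D^∨⟩ = Γ − v, where D^∨ is computed on the vertex set V \ {v}. -/
namespace ClutterPaper

variable {α : Type*} [DecidableEq α]

/-- `C` is a uniform clutter on vertex set `V` all of whose circuits have cardinality `c`
(i.e. a `(c-1)`-dimensional uniform clutter). -/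
def IsClutter (V : Finset α) (c : ℕ) (C : Finset (Finset α)) : Prop :=
  ∀ F ∈ C, F ⊆ V ∧ F.card = c

/-- The complement clutter `C̄`: all `c`-subsets of `V` not in `C`. -/
def compClutter (V : Finset α) (c : ℕ) (C : Finset (Finset α)) : Finset (Finset α) :=
  V.powersetCard c \ C

/-- `C^∨ = { V \ F | F ∈ C̄ }`. -/
def clutterDual (V : Finset α) (c : ℕ) (C : Finset (Finset α)) : Finset (Finset α) :=
  (compClutter V c C).image fun F => V \ F

/-- `A` is a clique of the clutter `C` (with circuit cardinality `c`) on vertex set `V`: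
all `c`-subsets of `A` are circuits. -/
def IsClique (V : Finset α) (c : ℕ) (C : Finset (Finset α)) (A : Finset α) : Prop :=
  A ⊆ V ∧ ∀ F ⊆ A, F.card = c → F ∈ C

/-- The closed neighborhood `N_C[e] = e ∪ { v ∈ V | e ∪ {v} ∈ C }`. -/
def closedNbhd (V : Finset α) (C : Finset (Finset α)) (e : Finset α) : Finset α :=
  e ∪ V.filter fun v => insert v e ∈ C

/-- `e` is a maximal subcircuit of the clutter `C` with circuit cardinality `c`:
`e` has cardinality `c - 1` and is contained in some circuit. -/
def IsMS (c : ℕ) (C : Finset (Finset α)) (e : Finset α) : Prop :=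
  e.card + 1 = c ∧ ∃ F ∈ C, e ⊆ F

/-- `e` is a simplicial maximal subcircuit: a maximal subcircuit whose closed
neighborhood is a clique. -/
def IsSMS (V : Finset α) (c : ℕ) (C : Finset (Finset α)) (e : Finset α) : Prop :=
  IsMS c C e ∧ IsClique V c C (closedNbhd V C e)

/-- `e` is a free maximal subcircuit: contained in exactly one circuit. -/
def IsFreeMS (c : ℕ) (C : Finset (Finset α)) (e : Finset α) : Prop :=
  e.card + 1 = c ∧ ∃! F, F ∈ C ∧ e ⊆ F

/-- Deletion `C − e` of a maximal subcircuit: the circuits not containing `e`. -/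
def delMS (C : Finset (Finset α)) (e : Finset α) : Finset (Finset α) :=
  C.filter fun F => ¬ e ⊆ F

/-- Deletion of a vertex: circuits (or faces) not containing `v`. -/
def delVert (C : Finset (Finset α)) (v : α) : Finset (Finset α) :=
  C.filter fun F => v ∉ F

/-- Chordality of a uniform clutter (circuit cardinality `c`) on `V`: there is a sequence of
deletions of simplicial maximal subcircuits ending in the clutter with no circuits. -/
inductive Chordal (V : Finset α) (c : ℕ) : Finset (Finset α) → Prop
  | empty : Chordal V c ∅
  | step {C : Finset (Finset α)} (e : Finset α) :
      IsSMS V c C e → Chordal V c (delMS C e) → Chordal V c C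

/-- The ascent `C⁺` of a clutter with circuit cardinality `c`: all `(c+1)`-subsets of `V`
that are cliques of `C`. -/
def ascent (V : Finset α) (c : ℕ) (C : Finset (Finset α)) : Finset (Finset α) :=
  (V.powersetCard (c + 1)).filter fun A => A.powersetCard c ⊆ C

/-- The simplicial complex `⟨D⟩` generated by a clutter `D`: all subsets of its elements. -/
def complexOf (D : Finset (Finset α)) : Finset (Finset α) :=
  D.biUnion Finset.powerset

/-- A family of finsets is a simplicial complex if it is downward closed. -/
def IsComplex (Δ : Finset (Finset α)) : Prop :=
  ∀ F ∈ Δ, ∀ G ⊆ F, G ∈ Δ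

/-- The facets (maximal faces) of a simplicial complex. -/
def facets (Δ : Finset (Finset α)) : Finset (Finset α) :=
  Δ.filter fun F => ∀ G ∈ Δ, F ⊆ G → F = G

/-- `link_Δ(v) = { F \ {v} | v ∈ F ∈ Δ }`. -/
def link (Δ : Finset (Finset α)) (v : α) : Finset (Finset α) :=
  (Δ.filter fun F => v ∈ F).image fun F => F.erase v

/-- `v` is a shedding vertex of `Δ`: no face of `link_Δ(v)` is a facet of `Δ − v`. -/
def Shedding (Δ : Finset (Finset α)) (v : α) : Prop :=
  ∀ F ∈ link Δ v, F ∉ facets (delVert Δ v)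

/-- Alexander dual of a simplicial complex on vertex set `V`:
`Δ^∨ = { V \ F | F ⊆ V, F ∉ Δ }`. -/
def alexDual (V : Finset α) (Δ : Finset (Finset α)) : Finset (Finset α) :=
  (V.powerset.filter fun F => F ∉ Δ).image fun F => V \ F

/-- `Δ` is pure with all facets of cardinality `c` (dimension `c - 1`), and nonempty. -/
def PureDim (Δ : Finset (Finset α)) (c : ℕ) : Prop :=
  Δ.Nonempty ∧ ∀ F ∈ facets Δ, F.card = c

/-- Vertex decomposability of a simplicial complex. -/
inductive VDecomp : Finset (Finset α) → Prop
  | simplex {Δ : Finset (Finset α)} : (facets Δ).card = 1 → VDecomp Δ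
  | shed {Δ : Finset (Finset α)} (v : α) : Shedding Δ v →
      VDecomp (link Δ v) → VDecomp (delVert Δ v) → VDecomp Δ

/-- The vertex set of a clutter (or of the complex it generates). -/
def vertexSet (Ω : Finset (Finset α)) : Finset α :=
  Ω.biUnion id

/-- `Ω` (given by its set of facets, each of cardinality `d+1`) is a `d`-cycle:
nonempty, pure of dimension `d`, `d`-path connected, and every `(d-1)`-dimensional
face lies in an even number of `d`-faces. -/
def IsCycle (d : ℕ) (Ω : Finset (Finset α)) : Prop :=
  Ω.Nonempty ∧ (∀ F ∈ Ω, F.card = d + 1) ∧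
    (∀ F ∈ Ω, ∀ G ∈ Ω,
      Relation.ReflTransGen (fun A B => A ∈ Ω ∧ B ∈ Ω ∧ (A ∩ B).card = d) F G) ∧
    ∀ e : Finset α, e.card = d → Even ((Ω.filter fun F => e ⊆ F).card)

/-- A face-minimal `d`-cycle: no `d`-cycle has a strictly smaller set of `d`-faces. -/
def FaceMinimalCycle (d : ℕ) (Ω : Finset (Finset α)) : Prop :=
  IsCycle d Ω ∧ ∀ Ω' : Finset (Finset α), IsCycle d Ω' → Ω' ⊆ Ω → Ω' = Ω

/-- `Ω` is `d`-complete: it contains every `(d+1)`-subset of its vertex set. -/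
def DComplete (d : ℕ) (Ω : Finset (Finset α)) : Prop :=
  ∀ F ⊆ vertexSet Ω, F.card = d + 1 → F ∈ Ω

/-- The complex `⟨C⟩` generated by the `d`-dimensional clutter `C` is `d`-chorded. -/
def Chorded (d : ℕ) (C : Finset (Finset α)) : Prop :=
  ∀ Ω : Finset (Finset α), FaceMinimalCycle d Ω → Ω ⊆ C → ¬ DComplete d Ω →
    ∃ (k : ℕ) (Ωs : Fin k → Finset (Finset α)), 2 ≤ k ∧
      (∀ i, IsCycle d (Ωs i) ∧ Ωs i ⊆ C) ∧
      (∀ F ∈ Ω, ∃ i, F ∈ Ωs i) ∧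
      (∀ F ∈ Ω, Odd ((Finset.univ.filter fun i => F ∈ Ωs i).card)) ∧
      (∀ F : Finset α, (∃ i, F ∈ Ωs i) → F ∉ Ω →
        Even ((Finset.univ.filter fun i => F ∈ Ωs i).card)) ∧
      ∀ i, vertexSet (Ωs i) ⊂ vertexSet Ω

/-- The circuits of `D` admit an admissible order. -/
def HasAdmissibleOrder (D : Finset (Finset α)) : Prop :=
  ∃ (t : ℕ) (F : Fin t → Finset α), Function.Injective F ∧
    (∀ G, G ∈ D ↔ ∃ i, F i = G) ∧
    ∀ i j : Fin t, j < i →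
      ∃ l ∈ F j \ F i, ∃ k : Fin t, k < i ∧ F k \ F i = {l}

/-- Contraction `D/v` of a (not necessarily uniform) clutter: the minimal sets of
`{ e \ {v} | e ∈ D }`. -/
def contractAux (D : Finset (Finset α)) (v : α) : Finset (Finset α) :=
  D.image fun e => e.erase v

def contract (D : Finset (Finset α)) (v : α) : Finset (Finset α) :=
  (contractAux D v).filter fun e => ∀ f ∈ contractAux D v, f ⊆ e → f = e

/-- `D` has a simplicial vertex (trivially true if `D` has no vertices). -/
def HasSimpVertex (D : Finset (Finset α)) : Prop :=
  vertexSet D = ∅ ∨ ∃ v ∈ vertexSet D, ∀ e₁ ∈ D, ∀ e₂ ∈ D, v ∈ e₁ → v ∈ e₂ →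
    ∃ e₃ ∈ D, e₃ ⊆ (e₁ ∪ e₂).erase v

/-- `D` is W-chordal: every clutter obtained from `D` by a sequence of vertex deletions
and contractions has a simplicial vertex. -/
def WChordal (D : Finset (Finset α)) : Prop :=
  ∀ D' : Finset (Finset α),
    Relation.ReflTransGen (fun X Y => ∃ v, Y = delVert X v ∨ Y = contract X v) D D' →
    HasSimpVertex D'

/-!
A face of `Γ = ⟨C^∨⟩` is a set `G ⊆ V` missing some non-circuit `(d+1)`-set `F`, and the
facets of `link_Δ(v)` are the sets `e` with `insert v e ∈ C`; so `⟨D^∨⟩` consists of the faces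
of `Γ` that miss a non-circuit containing `v`, and these all avoid `v`. Conversely, a face
`G ∌ v` of `Γ` missing a non-circuit `F ∌ v` lies in `(V \ F) \ {v}`, which is in the link of
`v`; shedding makes it a proper subface of some face `τ ∌ v` of `Γ`. Since `τ` has at least
`|V| - d - 1` elements and misses a non-circuit `F'`, it is `V \ F'`, whence `v ∈ F'`.
-/

lemma mem_complexOf {D : Finset (Finset α)} {G : Finset α} :
    G ∈ complexOf D ↔ ∃ F ∈ D, G ⊆ F := by
  simp [complexOf]

lemma isComplex_complexOf (D : Finset (Finset α)) : IsComplex (complexOf D) := by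
  intro F hF G hGF
  obtain ⟨H, hH, hFH⟩ := mem_complexOf.1 hF
  exact mem_complexOf.2 ⟨H, hH, hGF.trans hFH⟩

lemma Shedding.exists_ssuperset_erase {Δ : Finset (Finset α)} {v : α} (hshed : Shedding Δ v)
    (hΔ : IsComplex Δ) {σ : Finset α} (hσ : σ ∈ Δ) (hvσ : v ∈ σ) :
    ∃ τ ∈ Δ, v ∉ τ ∧ σ.erase v ⊂ τ := by
  have hlink : σ.erase v ∈ link Δ v :=
    Finset.mem_image.2 ⟨σ, Finset.mem_filter.2 ⟨hσ, hvσ⟩, rfl⟩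
  have hdel : σ.erase v ∈ delVert Δ v :=
    Finset.mem_filter.2 ⟨hΔ σ hσ _ (Finset.erase_subset v σ), Finset.notMem_erase v σ⟩
  have hnot := hshed _ hlink
  simp only [facets, Finset.mem_filter, hdel, true_and, not_forall] at hnot
  obtain ⟨τ, hτ, hστ, hne⟩ := hnot
  obtain ⟨hτΔ, hvτ⟩ := Finset.mem_filter.1 hτ
  exact ⟨τ, hτΔ, hvτ, Finset.ssubset_iff_subset_ne.2 ⟨hστ, hne⟩⟩

lemma mem_complexOf_clutterDual {V : Finset α} {c : ℕ} {C : Finset (Finset α)} {G : Finset α} :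
    G ∈ complexOf (clutterDual V c C) ↔ ∃ F ⊆ V, F.card = c ∧ F ∉ C ∧ G ⊆ V \ F := by
  simp only [mem_complexOf, clutterDual, compClutter, Finset.mem_image, Finset.mem_sdiff,
    Finset.mem_powersetCard]
  constructor
  · rintro ⟨_, ⟨F, ⟨⟨hFV, hFc⟩, hFC⟩, rfl⟩, hGF⟩
    exact ⟨F, hFV, hFc, hFC, hGF⟩
  · rintro ⟨F, hFV, hFc, hFC, hGF⟩
    exact ⟨V \ F, ⟨F, ⟨⟨hFV, hFc⟩, hFC⟩, rfl⟩, hGF⟩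

lemma mem_facets_link_complexOf {d : ℕ} {C : Finset (Finset α)}
    (hC : ∀ F ∈ C, F.card = d + 1) {v : α} {e : Finset α} :
    e ∈ facets (link (complexOf C) v) ↔ v ∉ e ∧ insert v e ∈ C := by
  rw [facets, Finset.mem_filter]
  simp only [link, Finset.mem_filter, Finset.mem_image, mem_complexOf]
  constructor
  · rintro ⟨⟨σ, ⟨⟨F, hFC, hσF⟩, hvσ⟩, rfl⟩, hmax⟩
    have hvF : v ∈ F := hσF hvσ
    have hσ : σ.erase v = F.erase v :=
      hmax _ ⟨F, ⟨⟨F, hFC, subset_rfl⟩, hvF⟩, rfl⟩ (Finset.erase_subset_erase v hσF)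
    exact ⟨Finset.notMem_erase v σ, by rwa [hσ, Finset.insert_erase hvF]⟩
  · rintro ⟨hve, heC⟩
    refine ⟨⟨insert v e, ⟨⟨insert v e, heC, subset_rfl⟩, Finset.mem_insert_self v e⟩,
      Finset.erase_insert hve⟩, ?_⟩
    rintro _ ⟨σ, ⟨⟨F, hFC, hσF⟩, hvσ⟩, rfl⟩ heσ
    have hcard : (σ.erase v).card ≤ e.card := by
      have hF := hC F hFC
      have he := hC _ heC
      rw [Finset.card_insert_of_notMem hve] at he
      calc (σ.erase v).card ≤ (F.erase v).card :=
            Finset.card_le_card (Finset.erase_subset_erase v hσF)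
        _ = e.card := by rw [Finset.card_erase_of_mem (hσF hvσ)]; omega
    exact Finset.eq_of_subset_of_card_le heσ hcard

lemma mem_complexOf_clutterDual_facets_link {V : Finset α} {d : ℕ} {C : Finset (Finset α)}
    (hC : ∀ F ∈ C, F.card = d + 1) {v : α} (hv : v ∈ V) {G : Finset α} :
    G ∈ complexOf (clutterDual (V.erase v) d (facets (link (complexOf C) v))) ↔
      ∃ F ⊆ V, F.card = d + 1 ∧ F ∉ C ∧ v ∈ F ∧ G ⊆ V \ F := by
  simp only [mem_complexOf_clutterDual, mem_facets_link_complexOf hC, not_and]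
  constructor
  · rintro ⟨e, heV, hec, heC, hGe⟩
    have hve : v ∉ e := fun h => Finset.notMem_erase v V (heV h)
    refine ⟨insert v e, Finset.insert_subset hv (heV.trans (Finset.erase_subset v V)), ?_,
      heC hve, Finset.mem_insert_self v e, ?_⟩
    · rw [Finset.card_insert_of_notMem hve, hec]
    · rwa [Finset.sdiff_insert, ← Finset.erase_sdiff_comm]
  · rintro ⟨F, hFV, hFc, hFC, hvF, hGF⟩
    refine ⟨F.erase v, Finset.erase_subset_erase v hFV, ?_, ?_, ?_⟩
    · rw [Finset.card_erase_of_mem hvF, hFc, Nat.add_sub_cancel]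
    · intro _ hF
      rw [Finset.insert_erase hvF] at hF
      exact absurd hF hFC
    · rwa [Finset.erase_sdiff_comm, ← Finset.sdiff_insert, Finset.insert_erase hvF]

lemma Shedding.exists_noncircuit_mem {V : Finset α} {c : ℕ}
    {C : Finset (Finset α)} {v : α} (hv : v ∈ V)
    (hshed : Shedding (complexOf (clutterDual V c C)) v) {F : Finset α} (hFV : F ⊆ V)
    (hFc : F.card = c) (hFC : F ∉ C) (hvF : v ∉ F) :
    ∃ F' ⊆ V, F'.card = c ∧ F' ∉ C ∧ v ∈ F' ∧ (V \ F).erase v ⊆ V \ F' := by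
  have hvσ : v ∈ V \ F := Finset.mem_sdiff.2 ⟨hv, hvF⟩
  obtain ⟨τ, hτ, hvτ, hστ⟩ := hshed.exists_ssuperset_erase (isComplex_complexOf _)
    (mem_complexOf_clutterDual.2 ⟨F, hFV, hFc, hFC, subset_rfl⟩) hvσ
  obtain ⟨F', hF'V, hF'c, hF'C, hτF'⟩ := mem_complexOf_clutterDual.1 hτ
  refine ⟨F', hF'V, hF'c, hF'C, ?_, hστ.subset.trans hτF'⟩
  by_contra hvF'
  have hσcard : ((V \ F).erase v).card + 1 = V.card - c := by
    rw [Finset.card_erase_add_one hvσ, Finset.card_sdiff_of_subset hFV, hFc]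
  have hτcard : (insert v τ).card ≤ V.card - c := by
    rw [← hF'c, ← Finset.card_sdiff_of_subset hF'V]
    exact Finset.card_le_card (Finset.insert_subset (Finset.mem_sdiff.2 ⟨hv, hvF'⟩) hτF')
  rw [Finset.card_insert_of_notMem hvτ] at hτcard
  have := Finset.card_lt_card hστ
  omega

theorem complexOf_dual_facets_link_general (V : Finset α) (d : ℕ) (C : Finset (Finset α))
    (hC : IsClutter V (d + 1) C)
    (v : α) (hv : v ∈ V)
    (hshed : Shedding (complexOf (clutterDual V (d + 1) C)) v) :
    complexOf (clutterDual (V.erase v) d (facets (link (complexOf C) v))) =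
      delVert (complexOf (clutterDual V (d + 1) C)) v := by
  ext G
  rw [mem_complexOf_clutterDual_facets_link (fun F hF => (hC F hF).2) hv, delVert,
    Finset.mem_filter, mem_complexOf_clutterDual]
  constructor
  · rintro ⟨F, hFV, hFc, hFC, hvF, hGF⟩
    exact ⟨⟨F, hFV, hFc, hFC, hGF⟩, fun hvG => (Finset.mem_sdiff.1 (hGF hvG)).2 hvF⟩
  · rintro ⟨⟨F, hFV, hFc, hFC, hGF⟩, hvG⟩
    by_cases hvF : v ∈ F
    · exact ⟨F, hFV, hFc, hFC, hvF, hGF⟩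
    obtain ⟨F', hF'V, hF'c, hF'C, hvF', hsub⟩ := hshed.exists_noncircuit_mem hv hFV
      hFc hFC hvF
    exact ⟨F', hF'V, hF'c, hF'C, hvF', fun x hx =>
      hsub (Finset.mem_erase.2 ⟨ne_of_mem_of_not_mem hx hvG, hGF hx⟩)⟩

/-- With `C` a non-complete `d`-clutter on `V`, `Δ = ⟨C⟩`, `Γ = ⟨C^∨⟩`, `v` a
shedding vertex of `Γ` and `D = Facets(link_Δ(v))`, one has `⟨D^∨⟩ = Γ − v`, where `D^∨`
is computed on the vertex set `V \ {v}`. -/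
theorem complexOf_dual_facets_link (V : Finset α) (d : ℕ) (C : Finset (Finset α))
    (hC : IsClutter V (d + 1) C) (hnc : C ≠ V.powersetCard (d + 1))
    (v : α) (hv : v ∈ V)
    (hshed : Shedding (complexOf (clutterDual V (d + 1) C)) v) :
    complexOf (clutterDual (V.erase v) d (facets (link (complexOf C) v))) =
      delVert (complexOf (clutterDual V (d + 1) C)) v :=
  complexOf_dual_facets_link_general V d C hC v hv hshed

end ClutterPaper
end

section
/- Let C_0 be the complete d-clutter on a finite vertex set V with |V| ≥ d + 1, and let F ∈ C_0. Then the d-clutter C = C_0 \ {F}, obtained from the complete clutter by deleting exactly one circuit, is chordal. -/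
namespace ClutterPaper

variable {α : Type*} [DecidableEq α]

/-!
Order `V` so that the vertices of `e = F \ {x}` come first, for some `x ∈ F`. Deleting `e` is a
simplicial step, because its closed neighbourhood lies in `V \ {x}`, which does not contain `F`. What
remains is the clutter of `(d+1)`-sets all of whose `d`-subsets lie in `U = binom(V, d) \ {e}`, and
`e` is the colex-least `d`-set, so `U` is a colex upper set. For such `U`, deleting the colex-least
member `e` of `U` is always simplicial: a vertex `v` outside `e` is a neighbour of `e` only if every
`e - u + v` lies in `U`, which forces `v` above all of `e`; so every `d`-subset of the closed
neighbourhood is colex-above `e` and lies in `U`. Induction on `U` finishes the proof.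
-/

open Finset

lemma exists_linearOrder_forall_lt {β : Type*} (s : Finset β) :
    ∃ _ : LinearOrder β, ∀ x ∈ s, ∀ y ∉ s, x < y := by
  classical
  obtain ⟨_, -⟩ := exists_wellFoundedLT β
  refine ⟨LinearOrder.lift' (fun x => toLex (decide (x ∉ s), x)) fun x y h => congrArg
    (fun p : Bool ×ₗ β => (ofLex p).2) h, fun x hx y hy => ?_⟩
  change toLex (decide (x ∉ s), x) < toLex (decide (y ∉ s), y)
  simp [Prod.Lex.toLex_lt_toLex, hx, hy]

section Colex

variable [LinearOrder α] {e f : Finset α} {u v : α}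

open Finset.Colex

lemma lt_of_toColex_le_insert_erase (hu : u ∈ e) (hv : v ∉ e)
    (h : toColex e ≤ toColex (insert v (e.erase u))) : u < v := by
  rw [← insert_erase hu, erase_insert (notMem_erase u e),
    insert_le_insert (notMem_erase u e) fun hv' => hv (mem_of_mem_erase hv')] at h
  exact h.lt_of_ne fun huv => hv (huv ▸ hu)

lemma toColex_le_toColex_of_forall_lt (hcard : e.card ≤ f.card)
    (h : ∀ u ∈ e, ∀ v ∈ f, v ∉ e → u < v) : toColex e ≤ toColex f := by
  intro u hue huf
  obtain ⟨v, hv⟩ : (f \ e).Nonempty := card_pos.1 <|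
    (card_pos.2 ⟨u, mem_sdiff.2 ⟨hue, huf⟩⟩).trans_le (card_sdiff_le_card_sdiff_iff.2 hcard)
  obtain ⟨hvf, hve⟩ := mem_sdiff.1 hv
  exact ⟨v, hvf, hve, (h u hue v hvf hve).le⟩

end Colex

lemma Chordal.of_delMS {V : Finset α} {c : ℕ} {C : Finset (Finset α)} {e : Finset α}
    (hcard : e.card + 1 = c) (hN : IsClique V c C (closedNbhd V C e))
    (h : Chordal V c (delMS C e)) : Chordal V c C := by
  by_cases hMS : ∃ F ∈ C, e ⊆ F
  · exact Chordal.step e ⟨⟨hcard, hMS⟩, hN⟩ h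
  · simp only [not_exists, not_and] at hMS
    rwa [delMS, filter_true_of_mem hMS] at h

lemma delMS_erase_of_subset {C : Finset (Finset α)} {e F : Finset α} (heF : e ⊆ F) :
    delMS (C.erase F) e = delMS C e := by
  rw [delMS, delMS, filter_erase, erase_eq_of_notMem]
  simp [heF]

lemma isClique_closedNbhd_erase {V F : Finset α} {c : ℕ} {x : α} (hFV : F ⊆ V) (hx : x ∈ F) :
    IsClique V c ((V.powersetCard c).erase F)
      (closedNbhd V ((V.powersetCard c).erase F) (F.erase x)) := by
  have hNV : closedNbhd V ((V.powersetCard c).erase F) (F.erase x) ⊆ V :=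
    union_subset ((erase_subset x F).trans hFV) (filter_subset _ _)
  have hxN : x ∉ closedNbhd V ((V.powersetCard c).erase F) (F.erase x) := by
    simp [closedNbhd, insert_erase hx]
  refine ⟨hNV, fun G hGN hGcard => ?_⟩
  rw [mem_erase, mem_powersetCard]
  exact ⟨by rintro rfl; exact hxN (hGN hx), hGN.trans hNV, hGcard⟩

section Ascent

variable {V : Finset α} {d : ℕ} {U : Finset (Finset α)}

lemma mem_ascent {G : Finset α} :
    G ∈ ascent V d U ↔ G ∈ V.powersetCard (d + 1) ∧ G.powersetCard d ⊆ U :=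
  mem_filter

lemma ascent_empty : ascent V d (∅ : Finset (Finset α)) = ∅ := by
  refine eq_empty_of_forall_notMem fun G hG => ?_
  obtain ⟨hGV, hGU⟩ := mem_ascent.1 hG
  obtain ⟨f, hf⟩ := powersetCard_nonempty.2
    (by rw [(mem_powersetCard.1 hGV).2]; omega : d ≤ G.card)
  exact notMem_empty f (hGU hf)

lemma ascent_powersetCard : ascent V d (V.powersetCard d) = V.powersetCard (d + 1) :=
  filter_true_of_mem fun _ hG => powersetCard_mono (mem_powersetCard.1 hG).1

lemma delMS_ascent {e : Finset α} (he : e.card = d) :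
    delMS (ascent V d U) e = ascent V d (U.erase e) := by
  ext G
  simp only [delMS, mem_filter, mem_ascent]
  constructor
  · rintro ⟨⟨hGV, hGU⟩, heG⟩
    refine ⟨hGV, fun f hf => mem_erase.2 ⟨?_, hGU hf⟩⟩
    rintro rfl
    exact heG (mem_powersetCard.1 hf).1
  · rintro ⟨hGV, hGU⟩
    refine ⟨⟨hGV, hGU.trans (erase_subset e U)⟩, fun heG => ?_⟩
    exact notMem_erase e U (hGU (mem_powersetCard.2 ⟨heG, he⟩))

end Ascent

section ColexUpperSet

variable [LinearOrder α] {V : Finset α} {d : ℕ} {U : Finset (Finset α)} {e : Finset α}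

def IsColexUpperSet (V : Finset α) (d : ℕ) (U : Finset (Finset α)) : Prop :=
  U ⊆ V.powersetCard d ∧ ∀ e ∈ U, ∀ f ∈ V.powersetCard d, toColex e ≤ toColex f → f ∈ U

lemma IsColexUpperSet.erase_min (hU : IsColexUpperSet V d U) (he : e ∈ U)
    (hmin : ∀ f ∈ U, toColex e ≤ toColex f) : IsColexUpperSet V d (U.erase e) := by
  refine ⟨(erase_subset e U).trans hU.1, fun f hf g hg hfg => ?_⟩
  obtain ⟨hfe, hfU⟩ := mem_erase.1 hf
  have hef : toColex e < toColex f := (hmin f hfU).lt_of_ne (by simpa [eq_comm] using hfe)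
  exact mem_erase.2 ⟨by rintro rfl; exact (hef.trans_le hfg).false, hU.2 f hfU g hg hfg⟩

lemma IsColexUpperSet.isClique_closedNbhd_ascent (hU : IsColexUpperSet V d U) (he : e ∈ U)
    (hmin : ∀ f ∈ U, toColex e ≤ toColex f) :
    IsClique V (d + 1) (ascent V d U) (closedNbhd V (ascent V d U) e) := by
  obtain ⟨heV, hecard⟩ := mem_powersetCard.1 (hU.1 he)
  set N := closedNbhd V (ascent V d U) e
  have hNV : N ⊆ V := union_subset heV (filter_subset _ _)
  have hN_gt : ∀ v ∈ N, v ∉ e → ∀ u ∈ e, u < v := by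
    intro v hvN hve u hu
    have hvU : insert v e ∈ ascent V d U :=
      (mem_filter.1 ((mem_union.1 hvN).resolve_left hve)).2
    refine lt_of_toColex_le_insert_erase hu hve (hmin _ ((mem_ascent.1 hvU).2 ?_))
    refine mem_powersetCard.2 ⟨insert_subset_insert v (erase_subset u e), ?_⟩
    have he_pos := card_pos.2 ⟨u, hu⟩
    rw [card_insert_of_notMem fun h => hve (mem_of_mem_erase h), card_erase_of_mem hu]
    omega
  refine ⟨hNV, fun G hGN hGcard => mem_ascent.2 ⟨mem_powersetCard.2
    ⟨hGN.trans hNV, hGcard⟩, fun f hf => ?_⟩⟩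
  obtain ⟨hfG, hfcard⟩ := mem_powersetCard.1 hf
  have hfd : f ∈ V.powersetCard d := mem_powersetCard.2 ⟨hfG.trans (hGN.trans hNV), hfcard⟩
  exact hU.2 e he f hfd (toColex_le_toColex_of_forall_lt (by omega)
    fun u hu v hvf hve => hN_gt v (hGN (hfG hvf)) hve u hu)

theorem IsColexUpperSet.chordal_ascent (hU : IsColexUpperSet V d U) :
    Chordal V (d + 1) (ascent V d U) := by
  induction U using strongInduction with
  | H U ih =>
    obtain rfl | hne := U.eq_empty_or_nonempty
    · rw [ascent_empty]
      exact Chordal.empty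
    obtain ⟨e, he, hmin⟩ := U.exists_min_image toColex hne
    have hecard : e.card = d := (mem_powersetCard.1 (hU.1 he)).2
    refine Chordal.of_delMS (by omega) (hU.isClique_closedNbhd_ascent he hmin) ?_
    rw [delMS_ascent hecard]
    exact ih _ (erase_ssubset he) (hU.erase_min he hmin)

lemma isColexUpperSet_powersetCard_erase (he : e ∈ V.powersetCard d)
    (hlt : ∀ x ∈ e, ∀ y ∉ e, x < y) : IsColexUpperSet V d ((V.powersetCard d).erase e) := by
  have hmin : ∀ f ∈ V.powersetCard d, toColex e ≤ toColex f := fun f hf =>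
    toColex_le_toColex_of_forall_lt
      (by rw [(mem_powersetCard.1 he).2, (mem_powersetCard.1 hf).2])
      fun u hu v _ hve => hlt u hu v hve
  exact IsColexUpperSet.erase_min ⟨subset_rfl, fun _ _ f hf _ => hf⟩ he hmin

end ColexUpperSet

theorem almost_complete_chordal_general (V : Finset α) (d : ℕ)
    (F : Finset α) (hF : F ∈ V.powersetCard (d + 1)) :
    Chordal V (d + 1) ((V.powersetCard (d + 1)).erase F) := by
  obtain ⟨hFV, hFcard⟩ := mem_powersetCard.1 hF
  obtain ⟨x, hx⟩ : F.Nonempty := card_pos.1 (by omega)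
  have hecard : (F.erase x).card = d := by rw [card_erase_of_mem hx, hFcard]; rfl
  obtain ⟨_, hlt⟩ := exists_linearOrder_forall_lt (F.erase x)
  refine Chordal.of_delMS (by omega) (isClique_closedNbhd_erase hFV hx) ?_
  rw [delMS_erase_of_subset (erase_subset x F), ← ascent_powersetCard, delMS_ascent hecard]
  exact (isColexUpperSet_powersetCard_erase
    (mem_powersetCard.2 ⟨(erase_subset x F).trans hFV, hecard⟩) hlt).chordal_ascent

/-- The `d`-clutter obtained from the complete clutter on `V` (with
`|V| ≥ d + 1`) by deleting exactly one circuit is chordal. -/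
theorem almost_complete_chordal (V : Finset α) (d : ℕ) (hV : d + 1 ≤ V.card)
    (F : Finset α) (hF : F ∈ V.powersetCard (d + 1)) :
    Chordal V (d + 1) ((V.powersetCard (d + 1)).erase F) :=
  almost_complete_chordal_general V d F hF

end ClutterPaper
end

section
/- Let C be a d-clutter on a finite vertex set V such that the circuits of the complement C̄ admit an admissible order. Then: (i) the circuits of the complement of the ascent C^+ (that is, the (d+2)-subsets of V that are not cliques of C) admit an admissible order; (ii) for each F ∈ SMS(C^+), the circuits of the complement of C − F, namely C̄ ∪ {F}, admit an admissible order; and (iii) for each v ∈ V, the circuits of the complement of C − v (taken within the (d+1)-subsets of V \ {v}) admit an admissible order. -/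
/-!
Admissible orders are handled as rankings: whenever `B` precedes `A`, some `K` preceding `A`
has `K \ A = {l}` with `l ∈ B \ A`.

Deleting a vertex `v` keeps a ranking admissible, because the witness `K ⊆ A ∪ {l}` avoids `v`
whenever `A` and `B` do. A simplicial maximal subcircuit `F` of `C⁺` can be appended after all
of `C̄`: if some `G ∈ C̄` had no `H ∈ C̄` with `H \ F = {l}` for an `l ∈ G \ F`, then `G` would
lie in the clique `N[F]`, and so would `G ∪ {m}` for any `m ∈ F \ G`, forcing `G ∈ C`.
Finally, the complement of `C⁺` consists of the `(d+2)`-subsets of `V` containing a member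
of `C̄`. Ranking them by the least rank of such a member, ties broken arbitrarily, is
admissible: ties differ in one element, and otherwise the exchange `A ↦ (A \ {x}) ∪ {l}`,
with `l` supplied by the order of `C̄`, produces the required `K`.
-/

namespace ClutterPaper

variable {α : Type*}

noncomputable def minRankBelow (D : Finset (Finset α)) (r : Finset α → ℕ) (A : Finset α) :
    ℕ :=
  sInf (r '' {H | H ∈ D ∧ H ⊆ A})

section MinRankBelow

variable {D : Finset (Finset α)} {r : Finset α → ℕ}

theorem minRankBelow_le {A H : Finset α} (hH : H ∈ D) (hHA : H ⊆ A) :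
    minRankBelow D r A ≤ r H :=
  Nat.sInf_le ⟨H, ⟨hH, hHA⟩, rfl⟩

theorem exists_rank_eq_minRankBelow {A H : Finset α} (hH : H ∈ D) (hHA : H ⊆ A) :
    ∃ H' ∈ D, H' ⊆ A ∧ r H' = minRankBelow D r A := by
  obtain ⟨H', ⟨hH', hH'A⟩, h⟩ := Nat.sInf_mem (⟨r H, H, ⟨hH, hHA⟩, rfl⟩ :
    (r '' {H | H ∈ D ∧ H ⊆ A}).Nonempty)
  exact ⟨H', hH', hH'A, h⟩

end MinRankBelow

variable [DecidableEq α]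

theorem subset_insert_of_sdiff_eq_singleton {K A : Finset α} {l : α} (h : K \ A = {l}) :
    K ⊆ insert l A := by
  rw [Finset.insert_eq, Finset.union_comm]
  exact sdiff_le_iff.mp h.le

theorem exists_sdiff_eq_singleton_of_card {A B H : Finset α} (hA : A.card = H.card + 1)
    (hB : B.card = A.card) (hHA : H ⊆ A) (hHB : H ⊆ B) (hne : B ≠ A) : ∃ b, B \ A = {b} := by
  rw [← Finset.card_eq_one]
  have hsplit := Finset.card_sdiff_add_card_inter B A
  have hinter := Finset.card_le_card (Finset.subset_inter hHB hHA)
  have hpos := (Finset.sdiff_nonempty.mpr fun hBA =>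
    hne (Finset.eq_of_subset_of_card_le hBA hB.ge)).card_pos
  omega

theorem insert_erase_sdiff_self {A : Finset α} {l : α} (x : α) (hl : l ∉ A) :
    insert l (A.erase x) \ A = {l} := by
  ext y
  simp only [Finset.mem_sdiff, Finset.mem_insert, Finset.mem_erase, Finset.mem_singleton]
  grind

section AdmissibleRank

variable {β : Type*} [LinearOrder β]

/-- An admissible order of `D` presented as a ranking: `D` listed by increasing `r`. -/
def IsAdmissibleRank (D : Finset (Finset α)) (r : Finset α → β) : Prop :=
  Set.InjOn r D ∧
    ∀ A ∈ D, ∀ B ∈ D, r B < r A → ∃ l ∈ B \ A, ∃ K ∈ D, r K < r A ∧ K \ A = {l}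

theorem IsAdmissibleRank.hasAdmissibleOrder {D : Finset (Finset α)} {r : Finset α → β}
    (h : IsAdmissibleRank D r) : HasAdmissibleOrder D := by
  obtain ⟨hinj, hadm⟩ := h
  set L := D.toList.mergeSort fun A B => decide (r A ≤ r B)
  have hperm : L.Perm D.toList := List.mergeSort_perm _ _
  have hmem : ∀ G, G ∈ L ↔ G ∈ D := fun G => by rw [hperm.mem_iff, Finset.mem_toList]
  have hget_inj : Function.Injective L.get :=
    List.nodup_iff_injective_get.mp (hperm.nodup_iff.mpr D.nodup_toList)
  have hsorted : L.Pairwise fun A B => r A ≤ r B := by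
    simpa using List.pairwise_mergeSort (le := fun A B => decide (r A ≤ r B))
      (fun _ _ _ hab hbc => by simp only [decide_eq_true_eq] at *; exact hab.trans hbc)
      (fun A B => by simpa using le_total (r A) (r B)) D.toList
  refine ⟨L.length, L.get, hget_inj, fun G => by rw [← hmem, List.mem_iff_get], ?_⟩
  intro i j hji
  have hA := (hmem _).mp (L.get_mem i)
  have hlt : r (L.get j) < r (L.get i) :=
    (hsorted.rel_get_of_lt hji).lt_of_ne fun h =>
      hji.ne (hget_inj (hinj ((hmem _).mp (L.get_mem j)) hA h))
  obtain ⟨l, hl, K, hK, hrK, hKA⟩ := hadm _ hA _ ((hmem _).mp (L.get_mem j)) hlt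
  obtain ⟨k, rfl⟩ := List.mem_iff_get.mp ((hmem K).mpr hK)
  refine ⟨l, hl, k, lt_of_not_ge fun hik => ?_, hKA⟩
  rcases hik.lt_or_eq with hik | rfl
  · exact (hsorted.rel_get_of_lt hik).not_gt hrK
  · exact hrK.false

theorem HasAdmissibleOrder.exists_rank {D : Finset (Finset α)} (h : HasAdmissibleOrder D) :
    ∃ r : Finset α → ℕ, IsAdmissibleRank D r := by
  obtain ⟨t, F, hFinj, hmem, hadm⟩ := h
  have hrank (i : Fin t) : Function.extend F (fun i => (i : ℕ)) 0 (F i) = i :=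
    hFinj.extend_apply _ _ i
  refine ⟨Function.extend F (fun i => (i : ℕ)) 0, ?_, ?_⟩
  · intro A hA B hB hAB
    obtain ⟨i, rfl⟩ := (hmem A).mp hA
    obtain ⟨j, rfl⟩ := (hmem B).mp hB
    rw [hrank, hrank] at hAB
    rw [Fin.ext hAB]
  · intro A hA B hB hBA
    obtain ⟨i, rfl⟩ := (hmem A).mp hA
    obtain ⟨j, rfl⟩ := (hmem B).mp hB
    rw [hrank, hrank] at hBA
    obtain ⟨l, hl, k, hki, hkl⟩ := hadm i j hBA
    exact ⟨l, hl, F k, (hmem _).mpr ⟨k, rfl⟩, by rwa [hrank, hrank], hkl⟩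

theorem IsAdmissibleRank.delVert {D : Finset (Finset α)} {r : Finset α → β}
    (h : IsAdmissibleRank D r) (v : α) : IsAdmissibleRank (delVert D v) r := by
  obtain ⟨hinj, hadm⟩ := h
  simp only [IsAdmissibleRank, ClutterPaper.delVert, Finset.coe_filter, Finset.mem_filter]
  refine ⟨hinj.mono fun _ hA => hA.1, fun A hA B hB hBA => ?_⟩
  obtain ⟨l, hl, K, hK, hrK, hKA⟩ := hadm A hA.1 B hB.1 hBA
  refine ⟨l, hl, K, ⟨hK, fun hvK => ?_⟩, hrK, hKA⟩
  rcases Finset.mem_insert.mp (subset_insert_of_sdiff_eq_singleton hKA hvK) with rfl | hvA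
  · exact hB.2 (Finset.mem_sdiff.mp hl).1
  · exact hA.2 hvA

theorem IsAdmissibleRank.insert_top {D : Finset (Finset α)} {r : Finset α → β}
    (h : IsAdmissibleRank D r) {F : Finset α} (hF : F ∉ D)
    (hquot : ∀ G ∈ D, ∃ l ∈ G \ F, ∃ H ∈ D, H \ F = {l}) :
    IsAdmissibleRank (insert F D) fun G => if G = F then ⊤ else (r G : WithTop β) := by
  obtain ⟨hinj, hadm⟩ := h
  set r' : Finset α → WithTop β := fun G => if G = F then ⊤ else (r G : WithTop β)
  have hr'F : r' F = ⊤ := if_pos rfl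
  have hr'D {G : Finset α} (hG : G ∈ D) : r' G = r G :=
    if_neg fun hGF : G = F => hF (hGF ▸ hG)
  refine ⟨fun A hA B hB hAB => ?_, fun A hA B hB hBA => ?_⟩
  · rcases Finset.mem_insert.mp hA with rfl | hAD <;>
      rcases Finset.mem_insert.mp hB with hBF | hBD
    · exact hBF.symm
    · simp [hr'F, hr'D hBD] at hAB
    · simp [hBF, hr'F, hr'D hAD] at hAB
    · rw [hr'D hAD, hr'D hBD, WithTop.coe_eq_coe] at hAB
      exact hinj hAD hBD hAB
  rcases Finset.mem_insert.mp hA with rfl | hAD <;>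
    rcases Finset.mem_insert.mp hB with hBF | hBD
  · exact absurd hBA (by rw [hBF]; exact lt_irrefl _)
  · obtain ⟨l, hl, H, hH, hHA⟩ := hquot B hBD
    exact ⟨l, hl, H, Finset.mem_insert_of_mem hH, by simp [hr'F, hr'D hH], hHA⟩
  · simp [hBF, hr'F, hr'D hAD] at hBA
  · rw [hr'D hAD, hr'D hBD, WithTop.coe_lt_coe] at hBA
    obtain ⟨l, hl, K, hK, hrK, hKA⟩ := hadm A hAD B hBD hBA
    exact ⟨l, hl, K, Finset.mem_insert_of_mem hK,
      by rwa [hr'D hK, hr'D hAD, WithTop.coe_lt_coe], hKA⟩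

end AdmissibleRank

theorem compClutter_erase_delVert (V : Finset α) (c : ℕ) (C : Finset (Finset α)) (v : α) :
    compClutter (V.erase v) c (delVert C v) = delVert (compClutter V c C) v := by
  ext G
  simp only [compClutter, delVert, Finset.mem_sdiff, Finset.mem_powersetCard,
    Finset.subset_erase, Finset.mem_filter]
  tauto

theorem mem_compClutter {V : Finset α} {c : ℕ} {C : Finset (Finset α)} {G : Finset α} :
    G ∈ compClutter V c C ↔ (G ⊆ V ∧ G.card = c) ∧ G ∉ C := by
  rw [compClutter, Finset.mem_sdiff, Finset.mem_powersetCard]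

theorem mem_ascent_s11 {V : Finset α} {c : ℕ} {C : Finset (Finset α)} {A : Finset α} :
    A ∈ ascent V c C ↔ (A ⊆ V ∧ A.card = c + 1) ∧ ∀ H ⊆ A, H.card = c → H ∈ C := by
  simp only [ascent, Finset.mem_filter, Finset.mem_powersetCard,
    Finset.subset_iff (s₁ := A.powersetCard c)]
  grind

section CardSupersets

/-- The `k`-subsets of `V` containing a member of `D`, i.e. the squarefree monomials of
degree `k` in the ideal `I(D)`. -/
def cardSupersets (V : Finset α) (k : ℕ) (D : Finset (Finset α)) : Finset (Finset α) :=
  (V.powersetCard k).filter fun A => ∃ H ∈ D, H ⊆ A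

theorem mem_cardSupersets {V : Finset α} {k : ℕ} {D : Finset (Finset α)} {A : Finset α} :
    A ∈ cardSupersets V k D ↔ (A ⊆ V ∧ A.card = k) ∧ ∃ H ∈ D, H ⊆ A := by
  rw [cardSupersets, Finset.mem_filter, Finset.mem_powersetCard]

variable {D : Finset (Finset α)} {r : Finset α → ℕ} {c : ℕ} {V : Finset α}

theorem exists_sdiff_eq_singleton_of_minRankBelow_eq (hD : ∀ H ∈ D, H.card = c)
    (hr : Set.InjOn r D) {A B : Finset α} (hA : A ∈ cardSupersets V (c + 1) D)
    (hB : B ∈ cardSupersets V (c + 1) D) (heq : minRankBelow D r B = minRankBelow D r A)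
    (hne : B ≠ A) : ∃ b, B \ A = {b} := by
  obtain ⟨⟨-, hAc⟩, HA₀, hHA₀, hHA₀A⟩ := mem_cardSupersets.mp hA
  obtain ⟨⟨-, hBc⟩, HB₀, hHB₀, hHB₀B⟩ := mem_cardSupersets.mp hB
  obtain ⟨HA, hHA, hHAA, hrHA⟩ := exists_rank_eq_minRankBelow (r := r) hHA₀ hHA₀A
  obtain ⟨HB, hHB, hHBB, hrHB⟩ := exists_rank_eq_minRankBelow (r := r) hHB₀ hHB₀B
  obtain rfl : HB = HA := hr hHB hHA (by rw [hrHA, hrHB, heq])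
  exact exists_sdiff_eq_singleton_of_card (by rw [hAc, hD HB hHB]) (hBc.trans hAc.symm)
    hHAA hHBB hne

theorem exists_exchange_of_minRankBelow_lt (hD : ∀ H ∈ D, H.card = c)
    (hr : IsAdmissibleRank D r) {A B : Finset α} (hA : A ∈ cardSupersets V (c + 1) D)
    (hB : B ∈ cardSupersets V (c + 1) D) (hlt : minRankBelow D r B < minRankBelow D r A) :
    ∃ l ∈ B \ A, ∃ K ∈ cardSupersets V (c + 1) D,
      minRankBelow D r K < minRankBelow D r A ∧ K \ A = {l} := by
  obtain ⟨⟨hAV, hAc⟩, HA₀, hHA₀, hHA₀A⟩ := mem_cardSupersets.mp hA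
  obtain ⟨⟨hBV, -⟩, HB₀, hHB₀, hHB₀B⟩ := mem_cardSupersets.mp hB
  obtain ⟨HA, hHA, hHAA, hrHA⟩ := exists_rank_eq_minRankBelow (r := r) hHA₀ hHA₀A
  obtain ⟨HB, hHB, hHBB, hrHB⟩ := exists_rank_eq_minRankBelow (r := r) hHB₀ hHB₀B
  obtain ⟨l, hl, K₀, hK₀, hrK₀, hK₀HA⟩ := hr.2 HA hHA HB hHB (by omega)
  have hK₀sub := subset_insert_of_sdiff_eq_singleton hK₀HA
  have hlB : l ∈ B := hHBB (Finset.mem_sdiff.mp hl).1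
  have hlA : l ∉ A := fun hlA =>
    (minRankBelow_le hK₀ (hK₀sub.trans (Finset.insert_subset hlA hHAA))).not_gt (hrHA ▸ hrK₀)
  obtain ⟨x, hx⟩ : (A \ K₀).Nonempty := Finset.sdiff_nonempty.mpr fun hAK₀ => by
    have := Finset.card_le_card hAK₀
    rw [hAc, hD K₀ hK₀] at this
    omega
  obtain ⟨hxA, hxK₀⟩ := Finset.mem_sdiff.mp hx
  have hK₀K : K₀ ⊆ insert l (A.erase x) := by
    intro y hy
    rcases Finset.mem_insert.mp (hK₀sub hy) with rfl | hyHA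
    · exact Finset.mem_insert_self _ _
    · exact Finset.mem_insert_of_mem
        (Finset.mem_erase.mpr ⟨fun hyx => hxK₀ (hyx ▸ hy), hHAA hyHA⟩)
  have hKc : (insert l (A.erase x)).card = c + 1 := by
    rw [Finset.card_insert_of_notMem fun h => hlA (Finset.mem_of_mem_erase h),
      Finset.card_erase_of_mem hxA, hAc, Nat.add_sub_cancel]
  refine ⟨l, Finset.mem_sdiff.mpr ⟨hlB, hlA⟩, insert l (A.erase x), ?_,
    (minRankBelow_le hK₀ hK₀K).trans_lt (hrHA ▸ hrK₀), insert_erase_sdiff_self x hlA⟩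
  exact mem_cardSupersets.mpr
    ⟨⟨Finset.insert_subset (hBV hlB) ((A.erase_subset x).trans hAV), hKc⟩, K₀, hK₀, hK₀K⟩

theorem IsAdmissibleRank.hasAdmissibleOrder_cardSupersets (hD : ∀ H ∈ D, H.card = c)
    (hr : IsAdmissibleRank D r) : HasAdmissibleOrder (cardSupersets V (c + 1) D) := by
  set E := cardSupersets V (c + 1) D
  refine IsAdmissibleRank.hasAdmissibleOrder
    (r := fun A => toLex (minRankBelow D r A, E.toList.idxOf A)) ⟨?_, ?_⟩
  · intro A hA B _ hAB
    exact (List.idxOf_inj (Finset.mem_toList.mpr hA)).mp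
      (congrArg Prod.snd (toLex.injective hAB))
  · intro A hA B hB hBA
    rcases Prod.Lex.toLex_lt_toLex.mp hBA with hlt | ⟨heq, -⟩
    · obtain ⟨l, hl, K, hK, hrK, hKA⟩ := exists_exchange_of_minRankBelow_lt hD hr hA hB hlt
      exact ⟨l, hl, K, hK, Prod.Lex.toLex_lt_toLex.mpr (Or.inl hrK), hKA⟩
    · obtain ⟨b, hb⟩ := exists_sdiff_eq_singleton_of_minRankBelow_eq hD hr.1 hA hB heq
        fun hBA' => (hBA' ▸ hBA).false
      exact ⟨b, hb ▸ Finset.mem_singleton_self b, B, hB, hBA, hb⟩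

end CardSupersets

theorem compClutter_ascent (V : Finset α) (c : ℕ) (C : Finset (Finset α)) :
    compClutter V (c + 1) (ascent V c C) = cardSupersets V (c + 1) (compClutter V c C) := by
  ext A
  rw [mem_compClutter, mem_ascent_s11, mem_cardSupersets]
  refine and_congr_right fun ⟨hAV, _⟩ => ?_
  simp only [mem_compClutter]
  grind

theorem IsMS.subset_and_mem_of_ascent {V : Finset α} {c : ℕ} {C : Finset (Finset α)}
    {F : Finset α} (h : IsMS (c + 1) (ascent V c C) F) : F ⊆ V ∧ F ∈ C := by
  obtain ⟨hFc, A, hA, hFA⟩ := h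
  obtain ⟨⟨hAV, -⟩, hAC⟩ := mem_ascent_s11.mp hA
  exact ⟨hFA.trans hAV, hAC F hFA (by omega)⟩

theorem insert_mem_ascent {V : Finset α} {c : ℕ} {C : Finset (Finset α)} {F : Finset α}
    {l : α} (hFV : F ⊆ V) (hFC : F ∈ C) (hFc : F.card = c) (hlV : l ∈ V) (hlF : l ∉ F)
    (hno : ∀ H ∈ compClutter V c C, H \ F ≠ {l}) : insert l F ∈ ascent V c C := by
  have hlFV : insert l F ⊆ V := Finset.insert_subset hlV hFV
  refine mem_ascent_s11.mpr ⟨⟨hlFV, by rw [Finset.card_insert_of_notMem hlF, hFc]⟩,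
    fun H hH hHc => ?_⟩
  by_cases hlH : l ∈ H
  · by_contra hHC
    refine hno H (mem_compClutter.mpr ⟨⟨hH.trans hlFV, hHc⟩, hHC⟩) ?_
    ext y
    have := @hH y
    simp only [Finset.mem_sdiff, Finset.mem_singleton, Finset.mem_insert] at this ⊢
    grind
  · rwa [Finset.eq_of_subset_of_card_le ((Finset.subset_insert_iff_of_notMem hlH).mp hH)
      (by rw [hHc, hFc])]

theorem IsSMS.exists_sdiff_eq_singleton {V : Finset α} {c : ℕ} {C : Finset (Finset α)}
    {F G : Finset α} (hF : IsSMS V (c + 1) (ascent V c C) F) (hG : G ∈ compClutter V c C) :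
    ∃ l ∈ G \ F, ∃ H ∈ compClutter V c C, H \ F = {l} := by
  obtain ⟨hFms, -, hclique⟩ := hF
  obtain ⟨hFV, hFC⟩ := hFms.subset_and_mem_of_ascent
  have hFc : F.card = c := by have := hFms.1; omega
  obtain ⟨⟨hGV, hGc⟩, hGC⟩ := mem_compClutter.mp hG
  by_contra! hno
  have hGN : G ⊆ closedNbhd V (ascent V c C) F := by
    intro g hg
    by_cases hgF : g ∈ F
    · exact Finset.mem_union_left _ hgF
    · exact Finset.mem_union_right _ (Finset.mem_filter.mpr ⟨hGV hg,
        insert_mem_ascent hFV hFC hFc (hGV hg) hgF (hno g (Finset.mem_sdiff.mpr ⟨hg, hgF⟩))⟩)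
  obtain ⟨m, hm⟩ : (F \ G).Nonempty := Finset.sdiff_nonempty.mpr fun hFG =>
    hGC (Finset.eq_of_subset_of_card_le hFG (by rw [hGc, hFc]) ▸ hFC)
  obtain ⟨hmF, hmG⟩ := Finset.mem_sdiff.mp hm
  have hmG_mem : insert m G ∈ ascent V c C :=
    hclique _ (Finset.insert_subset (Finset.mem_union_left _ hmF) hGN)
      (by rw [Finset.card_insert_of_notMem hmG, hGc])
  exact hGC ((mem_ascent_s11.mp hmG_mem).2 G (Finset.subset_insert _ _) hGc)

theorem admissible_order_stable_general (V : Finset α) (d : ℕ) (C : Finset (Finset α))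
    (h : HasAdmissibleOrder (compClutter V (d + 1) C)) :
    HasAdmissibleOrder (compClutter V (d + 2) (ascent V (d + 1) C)) ∧
      (∀ F : Finset α, IsSMS V (d + 2) (ascent V (d + 1) C) F →
        HasAdmissibleOrder (insert F (compClutter V (d + 1) C))) ∧
      ∀ v ∈ V, HasAdmissibleOrder (compClutter (V.erase v) (d + 1) (delVert C v)) := by
  obtain ⟨r, hr⟩ := h.exists_rank
  refine ⟨?_, fun F hF => ?_, fun v _ => ?_⟩
  · rw [show d + 2 = d + 1 + 1 from rfl, compClutter_ascent]
    exact hr.hasAdmissibleOrder_cardSupersets fun H hH => (mem_compClutter.mp hH).1.2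
  · have hFC := hF.1.subset_and_mem_of_ascent.2
    exact (hr.insert_top (fun hF' => (mem_compClutter.mp hF').2 hFC)
      fun G hG => hF.exists_sdiff_eq_singleton hG).hasAdmissibleOrder
  · rw [compClutter_erase_delVert]
    exact (hr.delVert v).hasAdmissibleOrder

/-- If the complement of the `d`-clutter `C` admits an admissible order, then
so do: (i) the complement of the ascent `C⁺`; (ii) `C̄ ∪ {F}` for each `F ∈ SMS(C⁺)`;
(iii) the complement of `C − v` (within `(d+1)`-subsets of `V \ {v}`) for each `v ∈ V`. -/
theorem admissible_order_stable (V : Finset α) (d : ℕ) (C : Finset (Finset α))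
    (hC : IsClutter V (d + 1) C)
    (h : HasAdmissibleOrder (compClutter V (d + 1) C)) :
    HasAdmissibleOrder (compClutter V (d + 2) (ascent V (d + 1) C)) ∧
      (∀ F : Finset α, IsSMS V (d + 2) (ascent V (d + 1) C) F →
        HasAdmissibleOrder (insert F (compClutter V (d + 1) C))) ∧
      ∀ v ∈ V, HasAdmissibleOrder (compClutter (V.erase v) (d + 1) (delVert C v)) :=
  admissible_order_stable_general V d C h

end ClutterPaper
end

section
/- Let Ω be a d-cycle. Then the set of facets of Ω is a disjoint union of the sets of facets of a family of face-minimal d-cycles; that is, there exist face-minimal d-cycles Ω_1, …, Ω_k with pairwise disjoint facet sets such that Facets(Ω) = Facets(Ω_1) ∪ ⋯ ∪ Facets(Ω_k). -/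
namespace ClutterPaper

variable {α : Type*} [DecidableEq α]

/-! Every `(d-1)`-face lies only in facets of a single component of the facet-adjacency graph,
so each component of a nonempty mod-2 cycle inherits the evenness and is a `d`-cycle; it
contains a face-minimal `d`-cycle `Ω'`. Removing `Ω'` leaves a mod-2 cycle with fewer facets,
and induction on the number of facets yields the partition. -/

open Finset Relation

def IsMod2Cycle (d : ℕ) (Ω : Finset (Finset α)) : Prop :=
  (∀ F ∈ Ω, F.card = d + 1) ∧
    ∀ e : Finset α, e.card = d → Even ((Ω.filter fun F => e ⊆ F).card)

def FacetAdj (d : ℕ) (Ω : Finset (Finset α)) (A B : Finset α) : Prop :=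
  A ∈ Ω ∧ B ∈ Ω ∧ (A ∩ B).card = d

instance (d : ℕ) (Ω : Finset (Finset α)) : Std.Symm (FacetAdj d Ω) where
  symm _ _ h := ⟨h.2.1, h.1, by rw [inter_comm]; exact h.2.2⟩

open scoped Classical in
noncomputable def facetComponent (d : ℕ) (Ω : Finset (Finset α)) (F₀ : Finset α) :
    Finset (Finset α) :=
  Ω.filter (ReflTransGen (FacetAdj d Ω) F₀)

section

variable {d : ℕ} {Ω Ω' : Finset (Finset α)} {F₀ : Finset α}

theorem IsCycle.isMod2Cycle (h : IsCycle d Ω) : IsMod2Cycle d Ω :=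
  ⟨h.2.1, h.2.2.2⟩

theorem IsMod2Cycle.sdiff (hΩ : IsMod2Cycle d Ω) (hΩ' : IsMod2Cycle d Ω') (hsub : Ω' ⊆ Ω) :
    IsMod2Cycle d (Ω \ Ω') := by
  refine ⟨fun F hF => hΩ.1 F (mem_sdiff.1 hF).1, fun e he => ?_⟩
  have hfilter : (Ω \ Ω').filter (e ⊆ ·) = Ω.filter (e ⊆ ·) \ Ω'.filter (e ⊆ ·) := by
    ext F
    simp only [mem_filter, mem_sdiff]
    tauto
  rw [hfilter, card_sdiff_of_subset (filter_subset_filter _ hsub)]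
  exact (hΩ.2 e he).tsub (hΩ'.2 e he)

theorem card_inter_eq_of_subset_of_ne {e F G : Finset α} (heF : e ⊆ F) (heG : e ⊆ G)
    (hF : F.card = e.card + 1) (hG : G.card = e.card + 1) (hFG : F ≠ G) :
    (F ∩ G).card = e.card := by
  have hle : e.card ≤ (F ∩ G).card := card_le_card (subset_inter heF heG)
  have hne : F ∩ G ≠ F := fun h =>
    hFG (eq_of_subset_of_card_le (inter_eq_left.1 h) (by omega))
  have hlt : (F ∩ G).card < F.card := card_lt_card (inter_subset_left.ssubset_of_ne hne)
  omega

theorem mem_facetComponent {F : Finset α} :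
    F ∈ facetComponent d Ω F₀ ↔ F ∈ Ω ∧ ReflTransGen (FacetAdj d Ω) F₀ F := by
  simp only [facetComponent, mem_filter]

theorem facetComponent_subset : facetComponent d Ω F₀ ⊆ Ω :=
  fun _ hF => (mem_facetComponent.1 hF).1

theorem reflTransGen_facetAdj_facetComponent {G : Finset α}
    (h : ReflTransGen (FacetAdj d Ω) F₀ G) :
    ReflTransGen (FacetAdj d (facetComponent d Ω F₀)) F₀ G := by
  induction h with
  | refl => exact .refl
  | tail hF₀B hBC ih =>
    exact ih.tail ⟨mem_facetComponent.2 ⟨hBC.1, hF₀B⟩,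
      mem_facetComponent.2 ⟨hBC.2.1, hF₀B.tail hBC⟩, hBC.2.2⟩

theorem filter_facetComponent_eq (hpure : ∀ F ∈ Ω, F.card = d + 1) {e G : Finset α}
    (he : e.card = d) (hG : G ∈ facetComponent d Ω F₀) (heG : e ⊆ G) :
    (facetComponent d Ω F₀).filter (e ⊆ ·) = Ω.filter (e ⊆ ·) := by
  refine (filter_subset_filter _ facetComponent_subset).antisymm fun F hF => ?_
  obtain ⟨hFΩ, heF⟩ := mem_filter.1 hF
  refine mem_filter.2 ⟨?_, heF⟩
  obtain rfl | hne := eq_or_ne G F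
  · exact hG
  obtain ⟨hGΩ, hF₀G⟩ := mem_facetComponent.1 hG
  have hGF : (G ∩ F).card = d := he ▸ card_inter_eq_of_subset_of_ne heG heF
    (he ▸ hpure G hGΩ) (he ▸ hpure F hFΩ) hne
  exact mem_facetComponent.2 ⟨hFΩ, hF₀G.tail ⟨hGΩ, hFΩ, hGF⟩⟩

theorem IsMod2Cycle.isCycle_facetComponent (hΩ : IsMod2Cycle d Ω) (hF₀ : F₀ ∈ Ω) :
    IsCycle d (facetComponent d Ω F₀) := by
  refine ⟨⟨F₀, mem_facetComponent.2 ⟨hF₀, .refl⟩⟩,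
    fun F hF => hΩ.1 F (facetComponent_subset hF), fun F hF G hG => ?_, fun e he => ?_⟩
  · exact (symm (reflTransGen_facetAdj_facetComponent (mem_facetComponent.1 hF).2)).trans
      (reflTransGen_facetAdj_facetComponent (mem_facetComponent.1 hG).2)
  · by_cases hmeets : ∃ G ∈ facetComponent d Ω F₀, e ⊆ G
    · obtain ⟨G, hG, heG⟩ := hmeets
      rw [filter_facetComponent_eq hΩ.1 he hG heG]
      exact hΩ.2 e he
    · rw [filter_false_of_mem fun G hG heG => hmeets ⟨G, hG, heG⟩]
      exact ⟨0, rfl⟩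

theorem faceMinimalCycle_iff_minimal : FaceMinimalCycle d Ω ↔ Minimal (IsCycle d) Ω :=
  and_congr_right fun _ => forall₂_congr fun _ _ =>
    ⟨fun h hsub => (h hsub).ge, fun h hsub => (h hsub).antisymm' hsub⟩

theorem IsCycle.exists_faceMinimalCycle_subset (h : IsCycle d Ω) :
    ∃ Ω' ⊆ Ω, FaceMinimalCycle d Ω' := by
  obtain ⟨Ω', hsub, hmin⟩ := exists_minimal_le_of_wellFoundedLT _ Ω h
  exact ⟨Ω', hsub, faceMinimalCycle_iff_minimal.2 hmin⟩

theorem IsMod2Cycle.exists_finpartition_faceMinimalCycle (hΩ : IsMod2Cycle d Ω) :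
    ∃ P : Finpartition Ω, ∀ p ∈ P.parts, FaceMinimalCycle d p := by
  induction Ω using strongInduction with
  | H Ω ih =>
  obtain rfl | ⟨F₀, hF₀⟩ := Ω.eq_empty_or_nonempty
  · exact ⟨Finpartition.empty _, by simp⟩
  obtain ⟨Ω', hsub, hmin⟩ := (hΩ.isCycle_facetComponent hF₀).exists_faceMinimalCycle_subset
  have hΩ'Ω : Ω' ⊆ Ω := hsub.trans facetComponent_subset
  have hne : Ω'.Nonempty := hmin.1.1
  obtain ⟨P, hP⟩ :=
    ih (Ω \ Ω') (sdiff_ssubset hΩ'Ω hne) (hΩ.sdiff hmin.1.isMod2Cycle hΩ'Ω)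
  refine ⟨P.extend hne.ne_empty sdiff_disjoint (sdiff_union_of_subset hΩ'Ω), ?_⟩
  simp only [Finpartition.extend_parts, forall_mem_insert]
  exact ⟨hmin, hP⟩

end

theorem _root_.Finpartition.exists_fin_disjoint_biUnion_eq {s : Finset α} (P : Finpartition s) :
    ∃ (k : ℕ) (f : Fin k → Finset α), (∀ i, f i ∈ P.parts) ∧
      (∀ i j, i ≠ j → Disjoint (f i) (f j)) ∧ s = univ.biUnion f := by
  refine ⟨_, fun i => P.parts.equivFin.symm i, fun i => (P.parts.equivFin.symm i).2,
    fun i j hij => P.disjoint (P.parts.equivFin.symm i).2 (P.parts.equivFin.symm j).2 ?_, ?_⟩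
  · exact fun h => hij (P.parts.equivFin.symm.injective (Subtype.ext h))
  · ext a
    simp only [mem_biUnion, mem_univ, true_and]
    refine ⟨fun ha => ?_, fun ⟨i, hi⟩ => P.le (P.parts.equivFin.symm i).2 hi⟩
    obtain ⟨t, ht, hat⟩ := P.exists_mem ha
    exact ⟨P.parts.equivFin ⟨t, ht⟩, by simpa using hat⟩

/-- The set of facets of a `d`-cycle is a disjoint union of the sets of
facets of a family of face-minimal `d`-cycles. -/
theorem cycle_eq_disjoint_union_face_minimal (d : ℕ) (Ω : Finset (Finset α))
    (h : IsCycle d Ω) :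
    ∃ (k : ℕ) (Ωs : Fin k → Finset (Finset α)),
      (∀ i, FaceMinimalCycle d (Ωs i)) ∧
      (∀ i j, i ≠ j → Disjoint (Ωs i) (Ωs j)) ∧
      Ω = Finset.univ.biUnion Ωs := by
  obtain ⟨P, hP⟩ := h.isMod2Cycle.exists_finpartition_faceMinimalCycle
  obtain ⟨k, Ωs, hmem, hdisj, hunion⟩ := P.exists_fin_disjoint_biUnion_eq
  exact ⟨k, Ωs, fun i => hP _ (hmem i), hdisj, hunion⟩

end ClutterPaper
end
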